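/- arXiv:1502.04600 — 6 statements merged into one kernel-verified Lean document; each statement's English description precedes it below -/
import Mathlib

section
/- In a normal schedule for n unit-execution-time jobs on two processors, with at most 2n-1 blocks (since each block boundary is a job start or completion and there are at most 2n such times), every preemption, job start, and job completion occurs at a time that is an integer multiple of 2^{-2n}. -/
/-- In a normal schedule for `n` unit jobs on two processors there are at most
`2n - 1` blocks (`q ≤ 2n` events `0 = e 1 < ... < e q`), the `j`-th block length is a
multiple of `1/2^j`, and every preemption, job start or job completion occurs at a
time lying in some block `j` at a `(j+1)`-normal offset from the block start.  Then
every such time is an integer multiple of `2^(-2n)`. -/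
theorem normal_schedule_times_dyadic (n q : ℕ) (hn : 1 ≤ n) (hq2 : 2 ≤ q)
    (hq : q ≤ 2 * n) (e : ℕ → ℝ) (he1 : e 1 = 0)
    (hblock : ∀ j, 1 ≤ j → j ≤ q - 1 → ∃ m : ℤ, e (j + 1) - e j = (m : ℝ) / 2 ^ j)
    (T : Set ℝ)
    (hT : ∀ t ∈ T, ∃ j, 1 ≤ j ∧ j ≤ q - 1 ∧ ∃ m : ℤ, t - e j = (m : ℝ) / 2 ^ (j + 1)) :
    ∀ t ∈ T, ∃ m : ℤ, t = (m : ℝ) / 2 ^ (2 * n) := by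
  -- first: e j is a multiple of 1/2^j for 1 ≤ j ≤ q - 1
  have he : ∀ j, 1 ≤ j → j ≤ q - 1 → ∃ m : ℤ, e j = (m : ℝ) / 2 ^ j := by
    intro j
    induction j with
    | zero => intro h; omega
    | succ k ih =>
      intro _ hk
      rcases Nat.eq_or_lt_of_le (Nat.one_le_iff_ne_zero.mpr (Nat.succ_ne_zero k)) with h1 | h1
      · have hk0 : k = 0 := by omega
        subst hk0
        exact ⟨0, by simp [he1]⟩
      · have hk1 : 1 ≤ k := by omega
        have hkq : k ≤ q - 1 := by omega
        obtain ⟨m, hm⟩ := ih hk1 hkq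
        obtain ⟨m', hm'⟩ := hblock k hk1 hkq
        refine ⟨2 * m + 2 * m', ?_⟩
        have h2 : (2 : ℝ) ^ (k + 1) = 2 ^ k * 2 := by ring
        have hpow : (2 : ℝ) ^ k ≠ 0 := by positivity
        have : e (k + 1) = (m : ℝ) / 2 ^ k + (m' : ℝ) / 2 ^ k := by
          have := hm'
          linarith
        rw [this, h2]
        push_cast
        field_simp
  intro t ht
  obtain ⟨j, hj1, hjq, m', hm'⟩ := hT t ht
  obtain ⟨m, hm⟩ := he j hj1 hjq
  have hjle : j + 1 ≤ 2 * n := by omega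
  refine ⟨(2 * m + m') * 2 ^ (2 * n - (j + 1)), ?_⟩
  have ht' : t = ((2 * m + m' : ℤ) : ℝ) / 2 ^ (j + 1) := by
    have h2 : (2 : ℝ) ^ (j + 1) = 2 ^ j * 2 := by ring
    have hpow : (2 : ℝ) ^ j ≠ 0 := by positivity
    have htv : t = (m : ℝ) / 2 ^ j + (m' : ℝ) / 2 ^ (j + 1) := by linarith
    rw [htv, h2]
    push_cast
    field_simp
  rw [ht']
  have hsplit : (2 : ℝ) ^ (2 * n) = 2 ^ (j + 1) * 2 ^ (2 * n - (j + 1)) := by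
    rw [← pow_add]; congr 1; omega
  push_cast
  rw [hsplit]
  have h1 : (2 : ℝ) ^ (j + 1) ≠ 0 := by positivity
  have h2 : (2 : ℝ) ^ (2 * n - (j + 1)) ≠ 0 := by positivity
  field_simp
end

section
/- Given m identical machines and jobs with processing times p_1, ..., p_k ≥ 0, a preemptive schedule of all jobs completing within a time interval of length L exists if and only if L ≥ max{(Σ p_i)/m, max_i p_i}. (McNaughton's theorem; the case m = 2 suffices.) -/
open MeasureTheory
open scoped ENNReal

/-- McNaughton's theorem: a preemptive schedule of jobs with processing times
`p i ≥ 0` on `m` identical machines fitting in an interval of length `L` exists iff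
`L ≥ max ((∑ p i)/m) (max_i p i)`.  A schedule is modelled by the set `S i` of times
at which job `i` executes: it has measure `p i`, lies in `[0, L]`, and at every
instant at most `m` jobs execute. -/
theorem mcnaughton (m k : ℕ) (hm : 0 < m) (p : Fin k → ℝ) (hp : ∀ i, 0 ≤ p i)
    (L : ℝ) (hL : 0 ≤ L) :
    (∃ S : Fin k → Set ℝ,
        (∀ i, MeasurableSet (S i)) ∧
        (∀ i, S i ⊆ Set.Icc 0 L) ∧
        (∀ i, volume (S i) = ENNReal.ofReal (p i)) ∧
        (∀ t : ℝ, {i | t ∈ S i}.ncard ≤ m)) ↔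
      ((∑ i, p i) / m ≤ L ∧ ∀ i, p i ≤ L) := by
  constructor
  · rintro ⟨S, hmeas, hsub, hvol, hcard⟩
    have hmax : ∀ i, p i ≤ L := by
      intro i
      have h1 : volume (S i) ≤ volume (Set.Icc 0 L) := measure_mono (hsub i)
      rw [hvol i, Real.volume_Icc] at h1
      have := (ENNReal.ofReal_le_ofReal_iff (by linarith)).1 h1
      linarith
    refine ⟨?_, hmax⟩
    -- key integral bound
    have pointwise : ∀ t : ℝ,
        (∑ i, (S i).indicator (fun _ => (1:ℝ≥0∞)) t)
          ≤ (Set.Icc (0:ℝ) L).indicator (fun _ => (m:ℝ≥0∞)) t := by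
      intro t
      by_cases ht : t ∈ Set.Icc (0:ℝ) L
      · rw [Set.indicator_of_mem ht]
        classical
        have h1 : (∑ i, (S i).indicator (fun _ => (1:ℝ≥0∞)) t)
            = ((Finset.univ.filter fun i => t ∈ S i).card : ℝ≥0∞) := by
          rw [← Finset.sum_boole]
          refine Finset.sum_congr rfl fun i _ => ?_
          by_cases hi : t ∈ S i <;> simp [Set.indicator, hi]
        rw [h1]
        have h2 : (Finset.univ.filter fun i => t ∈ S i).card = {i | t ∈ S i}.ncard := by
          rw [Set.ncard_eq_toFinset_card']
          congr 1
          ext i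
          simp
        rw [h2]
        exact_mod_cast Nat.cast_le.2 (hcard t)
      · have : ∀ i, (S i).indicator (fun _ => (1:ℝ≥0∞)) t = 0 := fun i =>
          Set.indicator_of_notMem (fun h => ht (hsub i h)) _
        simp [this]
    have key : ENNReal.ofReal (∑ i, p i) ≤ (m : ℝ≥0∞) * ENNReal.ofReal L := by
      calc ENNReal.ofReal (∑ i, p i) = ∑ i, ENNReal.ofReal (p i) :=
            ENNReal.ofReal_sum_of_nonneg fun i _ => hp i
        _ = ∑ i, volume (S i) := by simp [hvol]
        _ = ∑ i, ∫⁻ t, (S i).indicator (fun _ => (1:ℝ≥0∞)) t := by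
            refine Finset.sum_congr rfl fun i _ => ?_
            rw [lintegral_indicator_const (hmeas i), one_mul]
        _ = ∫⁻ t, ∑ i, (S i).indicator (fun _ => (1:ℝ≥0∞)) t :=
            (lintegral_finset_sum _ fun i _ => (measurable_const.indicator (hmeas i))).symm
        _ ≤ ∫⁻ t, (Set.Icc (0:ℝ) L).indicator (fun _ => (m:ℝ≥0∞)) t :=
            lintegral_mono pointwise
        _ = (m : ℝ≥0∞) * volume (Set.Icc (0:ℝ) L) :=
            lintegral_indicator_const measurableSet_Icc _
        _ = (m : ℝ≥0∞) * ENNReal.ofReal L := by rw [Real.volume_Icc, sub_zero]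
    have hsum : ∑ i, p i ≤ m * L := by
      have : ENNReal.ofReal (∑ i, p i) ≤ ENNReal.ofReal ((m:ℝ) * L) := by
        rwa [ENNReal.ofReal_mul (by positivity), ENNReal.ofReal_natCast]
      have := (ENNReal.ofReal_le_ofReal_iff (by positivity)).1 this
      linarith
    rw [div_le_iff₀ (by exact_mod_cast hm)]
    linarith
  · rintro ⟨hsumL, hmax⟩
    have hm' : (0:ℝ) < m := by exact_mod_cast hm
    have hsum : ∑ i, p i ≤ m * L := by
      rw [div_le_iff₀ hm'] at hsumL; linarith
    classical
    -- partial sums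
    set q : ℕ → ℝ := fun n => if h : n < k then p ⟨n, h⟩ else 0 with hq
    have hq0 : ∀ n, 0 ≤ q n := by
      intro n; rw [hq]; dsimp only; split
      · exact hp _
      · exact le_refl 0
    set c : ℕ → ℝ := fun n => ∑ j ∈ Finset.range n, q j with hc
    have hcmono : Monotone c := by
      intro a b hab
      exact Finset.sum_le_sum_of_subset_of_nonneg
        (Finset.range_subset_range.2 hab) (fun j _ _ => hq0 j)
    have hc0 : ∀ n, 0 ≤ c n := by
      intro n
      exact Finset.sum_nonneg fun j _ => hq0 j
    have hck : c k = ∑ i, p i := by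
      rw [hc]
      dsimp only
      rw [← Fin.sum_univ_eq_sum_range q k]
      refine Finset.sum_congr rfl fun i _ => ?_
      rw [hq]; simp [i.isLt]
    have hcs : ∀ i : Fin k, c (i + 1) = c i + p i := by
      intro i
      rw [hc]; dsimp only
      rw [Finset.sum_range_succ]
      congr 1
      rw [hq]; simp [i.isLt]
    have hcub : ∀ i : Fin k, c (i + 1) ≤ m * L := by
      intro i
      calc c (i + 1) ≤ c k := hcmono i.isLt
        _ = ∑ i, p i := hck
        _ ≤ m * L := hsum
    -- the schedule
    set A : Fin k → ℕ → Set ℝ := fun i r =>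
      Set.Ico (max (c i - r * L) 0) (min (c (i + 1) - r * L) L) with hA
    set S : Fin k → Set ℝ := fun i => ⋃ r ∈ Finset.range m, A i r with hS
    -- basic membership facts
    have hmemA : ∀ (i : Fin k) (r : ℕ) (x : ℝ), x ∈ A i r ↔
        (c i ≤ x + r * L ∧ x + r * L < c (i + 1) ∧ 0 ≤ x ∧ x < L) := by
      intro i r x
      rw [hA]
      simp only [Set.mem_Ico, max_le_iff, lt_min_iff]
      constructor
      · rintro ⟨⟨h1, h2⟩, h3, h4⟩
        exact ⟨by linarith, by linarith, h2, h4⟩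
      · rintro ⟨h1, h2, h3, h4⟩
        exact ⟨⟨by linarith, h3⟩, by linarith, h4⟩
    -- pairwise disjointness in r
    have hAdisj : ∀ (i : Fin k) (r r' : ℕ), r < r' → Disjoint (A i r) (A i r') := by
      intro i r r' hrr
      rw [Set.disjoint_left]
      intro x hx hx'
      rw [hmemA] at hx hx'
      obtain ⟨h1, h2, h3, h4⟩ := hx
      obtain ⟨h1', h2', h3', h4'⟩ := hx'
      have hr1 : (r:ℝ) + 1 ≤ (r':ℝ) := by exact_mod_cast hrr
      have : c i + L ≤ x + r' * L := by nlinarith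
      have : c (i+1) ≤ x + r' * L := by
        have := hcs i; have := hmax i; linarith
      linarith
    -- the B sets
    set B : Fin k → ℕ → Set ℝ := fun i r =>
      Set.Ico (max (c i) (r * L)) (min (c (i + 1)) ((r + 1) * L)) with hB
    have hvolAB : ∀ (i : Fin k) (r : ℕ), volume (A i r) = volume (B i r) := by
      intro i r
      rw [hA, hB]
      dsimp only
      rw [Real.volume_Ico, Real.volume_Ico]
      congr 1
      have h1 : min (c (i+1)) (((r:ℝ) + 1) * L) - r * L
          = min (c (i+1) - r * L) L := by
        rw [← min_sub_sub_right]; congr 1; ring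
      have h2 : max (c i) ((r:ℝ) * L) - r * L = max (c i - r * L) 0 := by
        rw [← max_sub_sub_right]; congr 1; ring
      linarith [h1, h2]
    have hBdisj : ∀ (i : Fin k) (r r' : ℕ), r < r' → Disjoint (B i r) (B i r') := by
      intro i r r' hrr
      rw [Set.disjoint_left]
      intro x hx hx'
      rw [hB] at hx hx'
      simp only [Set.mem_Ico, max_le_iff, lt_min_iff] at hx hx'
      have hr1 : (r:ℝ) + 1 ≤ (r':ℝ) := by exact_mod_cast hrr
      nlinarith [hx.1.2, hx.2.2, hx'.1.2, hx'.2.2]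
    have hBunion : ∀ i : Fin k, (⋃ r ∈ Finset.range m, B i r) = Set.Ico (c i) (c (i+1)) := by
      intro i
      ext x
      simp only [Set.mem_iUnion, Finset.mem_range, Set.mem_Ico, exists_prop]
      constructor
      · rintro ⟨r, hr, hx⟩
        rw [hB] at hx
        simp only [Set.mem_Ico, max_le_iff, lt_min_iff] at hx
        exact ⟨hx.1.1, hx.2.1⟩
      · rintro ⟨hx1, hx2⟩
        have hx0 : 0 ≤ x := le_trans (hc0 i) hx1
        have hxub : x < m * L := lt_of_lt_of_le hx2 (hcub i)
        have hL' : 0 < L := by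
          rcases lt_or_ge 0 L with h | h
          · exact h
          · exfalso; nlinarith
        refine ⟨⌊x / L⌋₊, ?_, ?_⟩
        · rw [Nat.floor_lt (by positivity), div_lt_iff₀ hL']; linarith
        · rw [hB]
          simp only [Set.mem_Ico, max_le_iff, lt_min_iff]
          refine ⟨⟨hx1, ?_⟩, hx2, ?_⟩
          · rw [← le_div_iff₀ hL']; exact Nat.floor_le (by positivity)
          · rw [← div_lt_iff₀ hL']; exact Nat.lt_floor_add_one _
      -- end
    have hAmeas : ∀ (i : Fin k) (r : ℕ), MeasurableSet (A i r) := by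
      intro i r; rw [hA]; exact measurableSet_Ico
    refine ⟨S, ?_, ?_, ?_, ?_⟩
    · intro i
      exact Finset.measurableSet_biUnion _ fun r _ => hAmeas i r
    · intro i x hx
      rw [hS] at hx
      simp only [Set.mem_iUnion, exists_prop] at hx
      obtain ⟨r, _, hx⟩ := hx
      rw [hmemA] at hx
      exact ⟨hx.2.2.1, le_of_lt hx.2.2.2⟩
    · intro i
      have hd : (↑(Finset.range m) : Set ℕ).PairwiseDisjoint (A i) := by
        intro r _ r' _ hne
        rcases lt_or_gt_of_ne hne with h | h
        · exact hAdisj i r r' h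
        · exact (hAdisj i r' r h).symm
      have hd' : (↑(Finset.range m) : Set ℕ).PairwiseDisjoint (B i) := by
        intro r _ r' _ hne
        rcases lt_or_gt_of_ne hne with h | h
        · exact hBdisj i r r' h
        · exact (hBdisj i r' r h).symm
      calc volume (S i) = ∑ r ∈ Finset.range m, volume (A i r) := by
            rw [hS]
            exact measure_biUnion_finset hd fun r _ => hAmeas i r
        _ = ∑ r ∈ Finset.range m, volume (B i r) :=
            Finset.sum_congr rfl fun r _ => hvolAB i r
        _ = volume (⋃ r ∈ Finset.range m, B i r) :=
            (measure_biUnion_finset hd' fun r _ => (by rw [hB]; exact measurableSet_Ico)).symm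
        _ = volume (Set.Ico (c i) (c (i+1))) := by rw [hBunion i]
        _ = ENNReal.ofReal (p i) := by
            rw [Real.volume_Ico, hcs i]; congr 1; ring
    · intro t
      have hex : ∀ i : {i : Fin k | t ∈ S i}, ∃ r, r < m ∧ t ∈ A i.1 r := by
        rintro ⟨i, hi⟩
        rw [hS] at hi
        simp only [Set.mem_iUnion, Finset.mem_range, exists_prop] at hi
        exact hi
      choose f hf1 hf2 using hex
      have hinj : Function.Injective (fun i : {i : Fin k | t ∈ S i} => (⟨f i, hf1 i⟩ : Fin m)) := by
        intro i j hij
        simp only [Fin.mk.injEq] at hij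
        have hti := hf2 i
        have htj := hf2 j
        rw [hij] at hti
        rw [hmemA] at hti htj
        ext1
        by_contra hne
        rcases lt_or_gt_of_ne (fun h : (i:Fin k) = (j:Fin k) => hne h) with h | h
        · have h1 : ((i:Fin k) : ℕ) + 1 ≤ ((j:Fin k) : ℕ) := h
          have := hcmono h1
          linarith [hti.2.1, htj.1]
        · have h1 : ((j:Fin k) : ℕ) + 1 ≤ ((i:Fin k) : ℕ) := h
          have := hcmono h1
          linarith [htj.2.1, hti.1]
      calc {i | t ∈ S i}.ncard = Nat.card {i : Fin k | t ∈ S i} :=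
            (Nat.card_coe_set_eq _).symm
        _ ≤ Nat.card (Fin m) := Nat.card_le_card_of_injective _ hinj
        _ = m := by simp
end

section
/- For two machines: given nonnegative reals ξ(a) for jobs a in a finite set, there exists a feasible preemptive two-machine schedule in an interval [e, e'] executing exactly ξ(a) units of each job a if and only if e' - e ≥ max{ (1/2)·Σ_a ξ(a), max_a ξ(a) }. -/
/-!
Necessity is a counting argument: the number of jobs running at time `t` is at most `2` and
vanishes outside `[e, e']`, so integrating it bounds `∑ ξ a` by `2 (e' - e)`.

Sufficiency is McNaughton's wrap-around rule: lay the jobs out as consecutive intervals in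
`[e, e + 2T)`, `T = e' - e`, and fold the second half back onto `[e, e + T)` by `t ↦ t - T`.
A job of length at most `T` does not meet its own shift, so folding preserves its measure, and at
each time at most one job comes from each half.
-/

open MeasureTheory Set ENNReal Function

section Multiplicity

variable {ι α : Type*} [Fintype ι] {S : ι → Set α} {k : ℕ}

theorem sum_indicator_one_le_mul_indicator_iUnion (hk : ∀ x, {i | x ∈ S i}.ncard ≤ k)
    (x : α) : ∑ i, (S i).indicator (1 : α → ℝ≥0∞) x ≤ k * (⋃ i, S i).indicator 1 x := by
  classical
  by_cases hx : x ∈ ⋃ i, S i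
  · have hcount : ∑ i, (S i).indicator (1 : α → ℝ≥0∞) x = ({i | x ∈ S i}.ncard : ℝ≥0∞) := by
      simp only [indicator_apply, Pi.one_apply, Finset.sum_boole, ← Finset.coe_filter_univ,
        ncard_coe_finset]
    rw [hcount, indicator_of_mem hx, Pi.one_apply, mul_one]
    exact_mod_cast hk x
  · simp only [mem_iUnion, not_exists] at hx
    simp [hx]

theorem sum_measure_le_mul_measure_iUnion [MeasurableSpace α] (μ : Measure α)
    (hS : ∀ i, MeasurableSet (S i)) (hk : ∀ x, {i | x ∈ S i}.ncard ≤ k) :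
    ∑ i, μ (S i) ≤ k * μ (⋃ i, S i) := by
  have hU : MeasurableSet (⋃ i, S i) := .iUnion hS
  calc ∑ i, μ (S i) = ∑ i, ∫⁻ x, (S i).indicator 1 x ∂μ := by
        simp only [lintegral_indicator_one (hS _)]
    _ = ∫⁻ x, ∑ i, (S i).indicator 1 x ∂μ :=
        (lintegral_finsetSum _ fun i _ => measurable_one.indicator (hS i)).symm
    _ ≤ ∫⁻ x, k * (⋃ i, S i).indicator 1 x ∂μ :=
        lintegral_mono (sum_indicator_one_le_mul_indicator_iUnion hk)
    _ = k * μ (⋃ i, S i) := by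
        rw [lintegral_const_mul _ (measurable_one.indicator hU), lintegral_indicator_one hU]

end Multiplicity

theorem exists_pairwise_disjoint_Ico_subset_Ico {ι : Type*} [Fintype ι] (ξ : ι → ℝ)
    (hξ : ∀ i, 0 ≤ ξ i) (a : ℝ) :
    ∃ s : ι → ℝ, (∀ i, Ico (s i) (s i + ξ i) ⊆ Ico a (a + ∑ i, ξ i)) ∧
      Pairwise (Disjoint on fun i => Ico (s i) (s i + ξ i)) := by
  classical
  let σ := Fintype.equivFin ι
  let before : ι → Finset ι := fun i => {j | σ j < σ i}
  let s : ι → ℝ := fun i => a + ∑ j ∈ before i, ξ j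
  have hend : ∀ i, s i + ξ i = a + ∑ j ∈ insert i (before i), ξ j := fun i => by
    rw [Finset.sum_insert (by simp [before]), add_comm (ξ i), add_assoc]
  have hsum_le : ∀ {t u : Finset ι}, t ⊆ u → a + ∑ j ∈ t, ξ j ≤ a + ∑ j ∈ u, ξ j := fun htu =>
    (add_le_add_iff_left a).2 (Finset.sum_le_sum_of_subset_of_nonneg htu fun j _ _ => hξ j)
  have hend_le : ∀ i j, σ i < σ j → s i + ξ i ≤ s j := by
    intro i j hij
    rw [hend]
    refine hsum_le (Finset.insert_subset (by simpa [before]) fun k hk => ?_)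
    simp only [before, Finset.mem_filter_univ] at hk ⊢
    exact hk.trans hij
  have hdisj : ∀ i j, σ i < σ j → Disjoint (Ico (s i) (s i + ξ i)) (Ico (s j) (s j + ξ j)) :=
    fun i j h => Ico_disjoint_Ico_same.mono_left (Ico_subset_Ico_right (hend_le i j h))
  refine ⟨s, fun i => Ico_subset_Ico ?_ ?_, fun i j hij => ?_⟩
  · exact le_add_of_nonneg_right (Finset.sum_nonneg fun j _ => hξ j)
  · exact (hend i).trans_le (hsum_le (Finset.subset_univ _))
  · rcases (σ.injective.ne hij).lt_or_gt with h | h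
    · exact hdisj i j h
    · exact (hdisj j i h).symm

def wrapAround (a T : ℝ) (I : Set ℝ) : Set ℝ :=
  Ico a (a + T) ∩ (I ∪ (· + T) ⁻¹' I)

section WrapAround

variable {a T : ℝ} {I : Set ℝ}

theorem measurableSet_wrapAround (hI : MeasurableSet I) : MeasurableSet (wrapAround a T I) :=
  measurableSet_Ico.inter (hI.union (measurable_add_const T hI))

theorem wrapAround_subset : wrapAround a T I ⊆ Ico a (a + T) :=
  inter_subset_left

theorem volume_wrapAround (hT : 0 ≤ T) (hI : MeasurableSet I) (hsub : I ⊆ Ico a (a + 2 * T))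
    (hdisj : Disjoint I ((· + T) ⁻¹' I)) : volume (wrapAround a T I) = volume I := by
  have hshift : Ico a (a + T) ∩ (· + T) ⁻¹' I = (· + T) ⁻¹' (Ico (a + T) (a + 2 * T) ∩ I) := by
    ext t
    simp only [mem_inter_iff, mem_Ico, mem_preimage]
    constructor <;> rintro ⟨⟨h1, h2⟩, h3⟩ <;> refine ⟨⟨?_, ?_⟩, h3⟩ <;> linarith
  have hhalves : Disjoint (Ico a (a + T) ∩ I) (Ico a (a + T) ∩ (· + T) ⁻¹' I) :=
    hdisj.mono inter_subset_right inter_subset_right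
  calc volume (wrapAround a T I)
      = volume (Ico a (a + T) ∩ I) + volume (Ico (a + T) (a + 2 * T) ∩ I) := by
        rw [wrapAround, inter_union_distrib_left, measure_union hhalves
          (measurableSet_Ico.inter (measurable_add_const T hI)), hshift,
          measure_preimage_add_right]
    _ = volume (Ico a (a + 2 * T) ∩ I) := by
        rw [← measure_union (disjoint_left.2 fun t h1 h2 => ?_) (measurableSet_Ico.inter hI),
          ← union_inter_distrib_right, Ico_union_Ico_eq_Ico (by linarith) (by linarith)]
        exact (not_lt.2 h2.1.1) h1.1.2
    _ = volume I := by rw [inter_eq_right.2 hsub]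

theorem disjoint_Ico_preimage_add {x y : ℝ} (h : y - x ≤ T) :
    Disjoint (Ico x y) ((· + T) ⁻¹' Ico x y) :=
  disjoint_left.2 fun t ht ht' => by
    simp only [mem_preimage, mem_Ico] at ht ht'
    linarith [ht.1, ht'.2]

theorem ncard_setOf_mem_wrapAround_le_two {ι : Type*} {I : ι → Set ℝ}
    (hI : Pairwise (Disjoint on I)) (t : ℝ) : {i | t ∈ wrapAround a T (I i)}.ncard ≤ 2 := by
  have hfiber : ∀ x, {i | x ∈ I i}.Subsingleton :=
    subsingleton_setOfPred_mem_iff_pairwise_disjoint.2 hI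
  have hle : ∀ x, {i | x ∈ I i}.ncard ≤ 1 := fun x =>
    (ncard_le_one (hfiber x).finite).2 fun _ hi _ hj => hfiber x hi hj
  have hsplit : {i | t ∈ wrapAround a T (I i)} ⊆ {i | t ∈ I i} ∪ {i | t + T ∈ I i} :=
    fun i hi => hi.2
  calc {i | t ∈ wrapAround a T (I i)}.ncard
      ≤ ({i | t ∈ I i} ∪ {i | t + T ∈ I i}).ncard :=
        ncard_le_ncard hsplit ((hfiber t).finite.union (hfiber (t + T)).finite)
    _ ≤ {i | t ∈ I i}.ncard + {i | t + T ∈ I i}.ncard := ncard_union_le _ _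
    _ ≤ 1 + 1 := add_le_add (hle t) (hle (t + T))

end WrapAround

/-- Two-machine version: given nonnegative amounts `ξ a` for jobs `a` in a finite
set, a feasible preemptive two-machine schedule in `[e, e']` executing exactly
`ξ a` units of each job exists iff `e' - e ≥ max ((∑ ξ a)/2) (max_a ξ a)`. -/
theorem two_machine_block_feasibility {J : Type*} [Fintype J]
    (ξ : J → ℝ) (hξ : ∀ a, 0 ≤ ξ a) (e e' : ℝ) (hee' : e ≤ e') :
    (∃ S : J → Set ℝ,
        (∀ a, MeasurableSet (S a)) ∧
        (∀ a, S a ⊆ Set.Icc e e') ∧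
        (∀ a, volume (S a) = ENNReal.ofReal (ξ a)) ∧
        (∀ t : ℝ, {a | t ∈ S a}.ncard ≤ 2)) ↔
      ((∑ a, ξ a) / 2 ≤ e' - e ∧ ∀ a, ξ a ≤ e' - e) := by
  have hT : 0 ≤ e' - e := sub_nonneg.2 hee'
  constructor
  · rintro ⟨S, hS, hsub, hvol, hk⟩
    refine ⟨?_, fun a => ?_⟩
    · have hload : ∑ a, volume (S a) ≤ (2 : ℕ) * volume (Icc e e') :=
        (sum_measure_le_mul_measure_iUnion volume hS hk).trans (by gcongr; exact iUnion_subset hsub)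
      rw [Real.volume_Icc, ← ofReal_natCast, ← ofReal_mul (by positivity)] at hload
      simp only [hvol, ← ofReal_sum_of_nonneg fun a _ => hξ a] at hload
      have := (ofReal_le_ofReal_iff (by positivity)).1 hload
      push_cast at this
      linarith
    · have hle := measure_mono (μ := volume) (hsub a)
      rwa [hvol, Real.volume_Icc, ofReal_le_ofReal_iff hT] at hle
  · rintro ⟨hsum, hmax⟩
    obtain ⟨s, hsub, hdisj⟩ := exists_pairwise_disjoint_Ico_subset_Ico ξ hξ e
    refine ⟨fun a => wrapAround e (e' - e) (Ico (s a) (s a + ξ a)),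
      fun a => measurableSet_wrapAround measurableSet_Ico,
      fun a => wrapAround_subset.trans (by rw [add_sub_cancel]; exact Ico_subset_Icc_self),
      fun a => ?_, ncard_setOf_mem_wrapAround_le_two hdisj⟩
    rw [volume_wrapAround hT measurableSet_Ico
      ((hsub a).trans (Ico_subset_Ico_right (by linarith)))
      (disjoint_Ico_preimage_add (by linarith [hmax a])), Real.volume_Ico, add_sub_cancel_left]
end

section
/- For every integer p ≥ 0 and every feasible preemptive two-machine schedule P of the job set J_p (unit jobs with the stated in-tree precedences and release dates), the amount of job a_4^p executed during [2p+2, ∞) is at least 1 - 1/2^{p+1}. -/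
open MeasureTheory

/-- Jobs of the instance `J_p`: the job `(i, j)` is `a_{j+1}^i`, a unit job; in
particular `(i, 3)` is the job `a_4^i`. -/
abbrev JobP (p : ℕ) := Fin (p + 1) × Fin 4

/-- Release dates: `r(a_j^i) = 2i` for `j ∈ {1,2,3}` and `r(a_4^i) = 2i + 1`. -/
def relDate {p : ℕ} (a : JobP p) : ℝ :=
  if a.2 = 3 then 2 * ((a.1 : ℕ) : ℝ) + 1 else 2 * ((a.1 : ℕ) : ℝ)

/-- Precedences: `a_j^i ≺ a_4^i` for `j ∈ {1,2,3}` and `a_4^i ≺ a_4^(i+1)`. -/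
def Prec {p : ℕ} (a b : JobP p) : Prop :=
  (a.1 = b.1 ∧ a.2 ≠ 3 ∧ b.2 = 3) ∨ (a.2 = 3 ∧ b.2 = 3 ∧ (a.1 : ℕ) + 1 = (b.1 : ℕ))

/-- A feasible preemptive two-machine schedule of `J_p`: `S a` is the set of times
at which the unit job `a` executes; release dates are respected, each job executes
for total time `1`, at most two jobs execute at any instant, and no job executes
before one of its predecessors has completed. -/
def FeasibleP {p : ℕ} (S : JobP p → Set ℝ) : Prop :=
  (∀ a, MeasurableSet (S a)) ∧
  (∀ a, S a ⊆ Set.Ici (relDate a)) ∧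
  (∀ a, volume (S a) = 1) ∧
  (∀ t : ℝ, {a | t ∈ S a}.ncard ≤ 2) ∧
  (∀ a b, Prec a b → ∀ s ∈ S a, ∀ t ∈ S b, s ≤ t)

/-!
Let `e i` be the work of `a_4^i` done before `2i + 2`. If `a_4^i` runs at time `t`, then
`[2i, t]` contains all of `a_1^i, a_2^i, a_3^i` and at least `1 - e (i - 1)` of `a_4^(i-1)`,
so two machines need `2 (t - 2i) ≥ 4 - e (i - 1)`. Hence `a_4^i` never runs before
`2i + 2 - e (i - 1) / 2`, which gives `e i ≤ e (i - 1) / 2`; with `e (-1) = 1` this yields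
`e p ≤ 1 / 2^(p+1)`.
-/

open Set

theorem sum_indicator_one_le {α ι : Type*} [Finite ι] {S : ι → Set α} {k : ℕ}
    (hcard : ∀ t, {a | t ∈ S a}.ncard ≤ k) (F : Finset ι) (t : α) :
    ∑ a ∈ F, (S a).indicator (1 : α → ENNReal) t ≤ k := by
  classical
  simp only [indicator_apply, Pi.one_apply, Finset.sum_boole]
  have hsub : (↑(F.filter (t ∈ S ·)) : Set ι) ⊆ {a | t ∈ S a} := fun a ha =>
    (Finset.mem_filter.mp ha).2
  exact_mod_cast (ncard_coe_finset _ ▸ ncard_le_ncard hsub (toFinite _)).trans (hcard t)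

theorem sum_measure_inter_le_mul {α ι : Type*} [MeasurableSpace α] {μ : Measure α} [Finite ι]
    {S : ι → Set α} {k : ℕ} (hmeas : ∀ a, MeasurableSet (S a))
    (hcard : ∀ t, {a | t ∈ S a}.ncard ≤ k) (F : Finset ι) (I : Set α) :
    ∑ a ∈ F, μ (S a ∩ I) ≤ k * μ I := by
  calc ∑ a ∈ F, μ (S a ∩ I)
      = ∫⁻ t in I, ∑ a ∈ F, (S a).indicator 1 t ∂μ := by
        rw [lintegral_finsetSum _ fun a _ => measurable_one.indicator (hmeas a)]
        simp only [lintegral_indicator_one (hmeas _), Measure.restrict_apply (hmeas _)]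
    _ ≤ ∫⁻ _ in I, (k : ENNReal) ∂μ := lintegral_mono (sum_indicator_one_le hcard F)
    _ = k * μ I := setLIntegral_const I _

theorem measure_le_inter_Ici_add_inter_Iio {α : Type*} [MeasurableSpace α] [LinearOrder α]
    (μ : Measure α) (s : Set α) (T : α) : μ s ≤ μ (s ∩ Ici T) + μ (s ∩ Iio T) := by
  simpa only [sdiff_eq, compl_Ici] using measure_le_inter_add_sdiff μ s (Ici T)

theorem volume_inter_Iio_le_of_subset_Ici {s : Set ℝ} {L : ℝ} (h : s ⊆ Ici L) (U : ℝ) :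
    volume (s ∩ Iio U) ≤ ENNReal.ofReal (U - L) :=
  Real.volume_Ico (a := L) ▸ measure_mono fun _ hx => ⟨h hx.1, hx.2⟩

namespace FeasibleP

variable {p : ℕ} {S : JobP p → Set ℝ}

theorem three_add_volume_inter_Icc_le (hS : FeasibleP S) {i : Fin (p + 1)} {t : ℝ}
    (ht : t ∈ S (i, 3)) {b : JobP p} (hb : b.2 = 3) :
    3 + volume (S b ∩ Icc (2 * (i : ℕ)) t) ≤ 2 * ENNReal.ofReal (t - 2 * (i : ℕ)) := by
  obtain ⟨hmeas, hrel, hvol, hcard, hprec⟩ := hS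
  have hfull : ∀ j : Fin 4, j ≠ 3 → volume (S (i, j) ∩ Icc (2 * (i : ℕ)) t) = 1 := by
    intro j hj
    have hsub : S (i, j) ⊆ Icc (2 * (i : ℕ)) t := fun s hs =>
      ⟨by simpa [relDate, hj] using hrel (i, j) hs,
        hprec (i, j) (i, 3) (Or.inl ⟨rfl, hj, rfl⟩) s hs t ht⟩
    rw [inter_eq_left.mpr hsub, hvol]
  have hcap := sum_measure_inter_le_mul (μ := volume) hmeas hcard
    ({(i, 0), (i, 1), (i, 2), b} : Finset (JobP p)) (Icc (2 * (i : ℕ)) t)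
  rw [Finset.sum_insert (by simp [Prod.ext_iff, hb]),
    Finset.sum_insert (by simp [Prod.ext_iff, hb]),
    Finset.sum_insert (by simp [Prod.ext_iff, hb]), Finset.sum_singleton,
    hfull 0 (by decide), hfull 1 (by decide), hfull 2 (by decide), Real.volume_Icc] at hcap
  calc 3 + volume (S b ∩ Icc (2 * (i : ℕ)) t)
      = 1 + (1 + (1 + volume (S b ∩ Icc (2 * (i : ℕ)) t))) := by ring
    _ ≤ _ := by exact_mod_cast hcap

theorem subset_Ici_of_one_le_volume_add (hS : FeasibleP S) {i : Fin (p + 1)} {b : JobP p}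
    (hb : b.2 = 3) {c : ℝ} (hc : 0 ≤ c)
    (hwork : ∀ t ∈ S (i, 3), 1 ≤ volume (S b ∩ Icc (2 * (i : ℕ)) t) + ENNReal.ofReal c) :
    S (i, 3) ⊆ Ici (2 * (i : ℕ) + 2 - c / 2) := by
  intro t ht
  have hrelease : 2 * ((i : ℕ) : ℝ) + 1 ≤ t := by simpa [relDate] using hS.2.1 (i, 3) ht
  have h : ENNReal.ofReal 4 ≤ ENNReal.ofReal (2 * (t - 2 * (i : ℕ)) + c) := by
    calc ENNReal.ofReal 4 = 3 + 1 := by norm_num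
      _ ≤ 3 + (volume (S b ∩ Icc (2 * (i : ℕ)) t) + ENNReal.ofReal c) := by
        gcongr; exact hwork t ht
      _ ≤ 2 * ENNReal.ofReal (t - 2 * (i : ℕ)) + ENNReal.ofReal c := by
        rw [← add_assoc]; gcongr; exact hS.three_add_volume_inter_Icc_le ht hb
      _ = ENNReal.ofReal (2 * (t - 2 * (i : ℕ)) + c) := by
        rw [ENNReal.ofReal_add (by linarith) hc, ENNReal.ofReal_mul zero_le_two,
          ENNReal.ofReal_ofNat]
  have := (ENNReal.ofReal_le_ofReal_iff (by linarith)).mp h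
  rw [mem_Ici]; linarith

theorem volume_inter_Iio_le_one_div_two_pow (hS : FeasibleP S) (i : Fin (p + 1)) :
    volume (S (i, 3) ∩ Iio (2 * (i : ℕ) + 2)) ≤ ENNReal.ofReal (1 / 2 ^ ((i : ℕ) + 1)) := by
  have ⟨_, _, hvol, _, hprec⟩ := hS
  induction i using Fin.induction with
  | zero =>
    -- `a_4^0` has no predecessor of the form `a_4^i`: with `c = 1` any `b` will do.
    have h := hS.subset_Ici_of_one_le_volume_add (i := 0) (b := (0, 3)) rfl zero_le_one
      fun _ _ => by simp
    refine (volume_inter_Iio_le_of_subset_Ici h _).trans_eq ?_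
    norm_num
  | succ i ih =>
    have h := hS.subset_Ici_of_one_le_volume_add (i := i.succ) (b := (i.castSucc, 3)) rfl
      (c := 1 / 2 ^ ((i : ℕ) + 1)) (by positivity) fun t ht => by
      calc 1 = volume (S (i.castSucc, 3)) := (hvol _).symm
        _ ≤ volume (S (i.castSucc, 3) ∩ Ici (2 * (i : ℕ) + 2))
            + volume (S (i.castSucc, 3) ∩ Iio (2 * (i : ℕ) + 2)) :=
          measure_le_inter_Ici_add_inter_Iio _ _ _
        _ ≤ _ := by
          refine add_le_add (measure_mono fun s ⟨hs, hs'⟩ => ⟨hs, ?_, ?_⟩) ?_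
          · simp only [mem_Ici, Fin.val_succ] at hs' ⊢; push_cast; linarith
          · exact hprec _ _ (Or.inr ⟨rfl, rfl, by simp⟩) s hs t ht
          · rwa [Fin.val_castSucc] at ih
    refine (volume_inter_Iio_le_of_subset_Ici h _).trans_eq ?_
    congr 1; simp only [Fin.val_succ]; push_cast; ring

end FeasibleP

/-- Claim 5.1: in any feasible preemptive two-machine schedule of `J_p`, the amount
of `a_4^p` executed during `[2p+2, ∞)` is at least `1 - 1/2^(p+1)`. -/
theorem a4p_late_work (p : ℕ) (S : JobP p → Set ℝ) (hS : FeasibleP S) :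
    ENNReal.ofReal (1 - 1 / 2 ^ (p + 1)) ≤
      volume (S (Fin.last p, 3) ∩ Set.Ici (2 * (p : ℝ) + 2)) := by
  have hearly := hS.volume_inter_Iio_le_one_div_two_pow (Fin.last p)
  rw [Fin.val_last] at hearly
  rw [ENNReal.ofReal_sub _ (by positivity), ENNReal.ofReal_one, tsub_le_iff_right]
  calc 1 = volume (S (Fin.last p, 3)) := (hS.2.2.1 _).symm
    _ ≤ volume (S (Fin.last p, 3) ∩ Ici (2 * (p : ℝ) + 2))
        + volume (S (Fin.last p, 3) ∩ Iio (2 * (p : ℝ) + 2)) :=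
      measure_le_inter_Ici_add_inter_Iio _ _ _
    _ ≤ _ := by gcongr
end

section
/- For every integer p ≥ 0, there exists a feasible preemptive two-machine schedule of J_p in which a_4^p completes exactly at time 2p + 3 - 1/2^{p+1}. -/
open MeasureTheory

/-!
Block `i` is laid out around `m = 2i + 1 - 2δ`, where `δ = 2^-(i+1)`: `a_3^i` runs on `[2i, m)`
beside `a_4^(i-1)`, then both machines are shared by `{a_1, a_2}` on `[m, m+1-δ)`,
`{a_1, a_3}` on `[m+1-δ, m+1)` and `{a_2, a_3}` on `[m+1, m+1+δ)`, and finally `a_4^i` runs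
on `[m+1+δ, m+2+δ)`. Since `m + 2 + δ = 2i + 3 - δ` is exactly the `m` of block `i + 1`, the
`a_4` jobs fill the gaps between the shared phases, so no instant carries more than two jobs,
and `a_4^p` completes at `2p + 3 - 2^-(p+1)`.
-/

open Set Function

noncomputable section

lemma volume_Ico_union_Ico {a b c d : ℝ} (hab : a ≤ b) (hbc : b ≤ c) (hcd : c ≤ d) :
    volume (Ico a b ∪ Ico c d) = ENNReal.ofReal (b - a + (d - c)) := by
  rw [measure_union (Ico_disjoint_Ico_same.mono_right (Ico_subset_Ico_left hbc))
    measurableSet_Ico, Real.volume_Ico, Real.volume_Ico,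
    ENNReal.ofReal_add (by linarith) (by linarith)]

namespace JobP

def lag (i : ℕ) : ℝ := 1 / 2 ^ (i + 1)

lemma lag_pos (i : ℕ) : 0 < lag i := by unfold lag; positivity

lemma lag_le_half (i : ℕ) : lag i ≤ 1 / 2 := by
  unfold lag
  gcongr
  exact le_self_pow₀ one_le_two (Nat.succ_ne_zero i)

lemma lag_antitone {i k : ℕ} (h : i ≤ k) : lag k ≤ lag i :=
  one_div_pow_le_one_div_pow_of_le one_le_two (by omega)

lemma two_mul_lag_le {i k : ℕ} (h : k < i) : 2 * lag i ≤ lag k := by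
  have hi : lag i ≤ lag (k + 1) := lag_antitone h
  have hk : 2 * lag (k + 1) = lag k := by simp only [lag, pow_succ]; field_simp
  linarith

def pairStart (i : ℕ) : ℝ := 2 * i + 1 - 2 * lag i

def blockSched (i : ℕ) : Fin 4 → Set ℝ :=
  ![Ico (pairStart i) (pairStart i + 1),
    Ico (pairStart i) (pairStart i + 1 - lag i) ∪ Ico (pairStart i + 1) (pairStart i + 1 + lag i),
    Ico (2 * i) (pairStart i) ∪ Ico (pairStart i + 1 - lag i) (pairStart i + 1 + lag i),
    Ico (pairStart i + 1 + lag i) (pairStart i + 2 + lag i)]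

section Block

variable {i : ℕ} {j : Fin 4} {t : ℝ}

lemma measurableSet_blockSched (i : ℕ) (j : Fin 4) : MeasurableSet (blockSched i j) := by
  obtain rfl | rfl | rfl | rfl : j = 0 ∨ j = 1 ∨ j = 2 ∨ j = 3 := by omega
  all_goals simp only [blockSched, Matrix.cons_val]; measurability

lemma volume_blockSched (i : ℕ) (j : Fin 4) : volume (blockSched i j) = 1 := by
  have := lag_pos i
  have := lag_le_half i
  obtain rfl | rfl | rfl | rfl : j = 0 ∨ j = 1 ∨ j = 2 ∨ j = 3 := by omega
  · simp [blockSched]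
  · simp only [blockSched, Matrix.cons_val]
    rw [volume_Ico_union_Ico (by linarith) (by linarith) (by linarith), ← ENNReal.ofReal_one]
    congr 1
    ring
  · simp only [blockSched, Matrix.cons_val]
    rw [volume_Ico_union_Ico (by unfold pairStart; linarith) (by unfold pairStart; linarith)
      (by linarith), ← ENNReal.ofReal_one]
    congr 1
    unfold pairStart
    ring
  · simp only [blockSched, Matrix.cons_val]
    norm_num

lemma blockSched_subset_Ico (hj : j ≠ 3) :
    blockSched i j ⊆ Ico (2 * i) (pairStart i + 1 + lag i) := by
  have := lag_pos i
  have := lag_le_half i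
  have : (2 * i : ℝ) ≤ pairStart i := by unfold pairStart; linarith
  obtain rfl | rfl | rfl : j = 0 ∨ j = 1 ∨ j = 2 := by omega
  · exact Ico_subset_Ico (by linarith) (by linarith)
  · exact union_subset (Ico_subset_Ico (by linarith) (by linarith))
      (Ico_subset_Ico (by linarith) le_rfl)
  · exact union_subset (Ico_subset_Ico le_rfl (by linarith))
      (Ico_subset_Ico (by linarith) le_rfl)

lemma pairStart_le_of_mem_blockSched (hj : j = 0 ∨ j = 1) (ht : t ∈ blockSched i j) :
    pairStart i ≤ t := by
  rcases hj with rfl | rfl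
  · exact ht.1
  · rcases ht with ht | ht
    · exact ht.1
    · linarith [ht.1]

lemma exists_notMem_blockSched (i : ℕ) (t : ℝ) : ∃ k ≠ 3, t ∉ blockSched i k := by
  -- `a_1` is idle outside `[m, m+1)`; inside, `a_3` is idle before `m+1-δ` and `a_2` after it.
  by_cases h0 : t ∈ blockSched i 0
  · obtain ⟨hm, hm'⟩ : pairStart i ≤ t ∧ t < pairStart i + 1 := h0
    by_cases hδ : t < pairStart i + 1 - lag i
    · refine ⟨2, by decide, ?_⟩
      rintro (h | h)
      · linarith [h.2]
      · linarith [h.1]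
    · refine ⟨1, by decide, ?_⟩
      rintro (h | h)
      · linarith [h.2]
      · linarith [h.1]
  · exact ⟨0, by decide, h0⟩

lemma disjoint_blockSched_three_Ico (i k : ℕ) :
    Disjoint (blockSched k 3) (Ico (pairStart i) (pairStart i + 1 + lag i)) := by
  refine disjoint_left.2 fun t ⟨hk, hk'⟩ ⟨hi, hi'⟩ => ?_
  unfold pairStart at *
  rcases lt_or_ge k i with h | h
  · have := two_mul_lag_le h
    have : (k : ℝ) + 1 ≤ i := by exact_mod_cast h
    linarith
  · have := lag_antitone h
    have : (i : ℝ) ≤ k := by exact_mod_cast h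
    linarith

lemma pairwise_disjoint_blockSched_three :
    Pairwise (Disjoint on fun k => blockSched k 3) := by
  intro k k' hkk'
  wlog h : k < k' generalizing k k'
  · exact (this hkk'.symm (by omega)).symm
  refine disjoint_left.2 fun t ⟨_, ht⟩ ⟨ht', _⟩ => ?_
  have := lag_pos k
  have := lag_le_half k'
  have : (k : ℝ) + 1 ≤ k' := by exact_mod_cast h
  unfold pairStart at *
  linarith

end Block

lemma csSup_blockSched_three (i : ℕ) : sSup (blockSched i 3) = 2 * i + 3 - lag i := by
  simp only [blockSched, Matrix.cons_val]
  rw [csSup_Ico (by linarith)]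
  unfold pairStart
  ring

def sched (p : ℕ) (a : JobP p) : Set ℝ := blockSched a.1 a.2

section Sched

variable {p : ℕ} {a b c : JobP p} {s t : ℝ}

lemma relDate_le_of_mem_sched (ht : t ∈ sched p a) : relDate a ≤ t := by
  unfold relDate
  split_ifs with h
  · have := lag_le_half a.1
    have ht : t ∈ blockSched a.1 3 := h ▸ ht
    simp only [blockSched, Matrix.cons_val] at ht
    unfold pairStart at ht
    linarith [ht.1]
  · exact (blockSched_subset_Ico h ht).1

lemma le_of_prec (hab : Prec a b) (hs : s ∈ sched p a) (ht : t ∈ sched p b) : s ≤ t := by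
  rcases hab with ⟨hblock, ha, hb⟩ | ⟨ha, hb, hsucc⟩
  · have hs := (blockSched_subset_Ico ha hs).2
    have ht : t ∈ blockSched b.1 3 := hb ▸ ht
    simp only [blockSched, Matrix.cons_val] at ht
    rw [hblock] at hs
    linarith [ht.1]
  · have hs : s ∈ blockSched a.1 3 := ha ▸ hs
    have ht : t ∈ blockSched b.1 3 := hb ▸ ht
    simp only [blockSched, Matrix.cons_val] at hs ht
    have := lag_pos a.1
    have := lag_le_half b.1
    have hsucc : (a.1 : ℝ) + 1 = b.1 := by exact_mod_cast hsucc
    unfold pairStart at hs ht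
    linarith [hs.2, ht.1]

lemma block_eq_of_mem_sched (ha : a.2 ≠ 3) (hb : b.2 ≠ 3) (hta : t ∈ sched p a)
    (htb : t ∈ sched p b) : a.1 = b.1 := by
  obtain ⟨hlo_a, hhi_a⟩ := blockSched_subset_Ico ha hta
  obtain ⟨hlo_b, hhi_b⟩ := blockSched_subset_Ico hb htb
  have := lag_pos a.1
  have := lag_pos b.1
  unfold pairStart at hhi_a hhi_b
  have hab : (a.1 : ℕ) < b.1 + 1 := by exact_mod_cast (by linarith : ((a.1 : ℕ) : ℝ) < b.1 + 1)
  have hba : (b.1 : ℕ) < a.1 + 1 := by exact_mod_cast (by linarith : ((b.1 : ℕ) : ℝ) < a.1 + 1)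
  exact Fin.ext (by omega)

lemma mem_Ico_pairStart_of_mem_sched (ha : a.2 ≠ 3) (hb : b.2 ≠ 3) (hab : a ≠ b)
    (hta : t ∈ sched p a) (htb : t ∈ sched p b) :
    t ∈ Ico (pairStart a.1) (pairStart a.1 + 1 + lag a.1) := by
  have hblock := block_eq_of_mem_sched ha hb hta htb
  have hj : a.2 ≠ b.2 := fun h => hab (Prod.ext hblock h)
  refine ⟨?_, (blockSched_subset_Ico ha hta).2⟩
  rcases (by omega : (a.2 = 0 ∨ a.2 = 1) ∨ (b.2 = 0 ∨ b.2 = 1)) with h | h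
  · exact pairStart_le_of_mem_blockSched h hta
  · exact hblock ▸ pairStart_le_of_mem_blockSched h htb

lemma eq_of_mem_sched_of_eq_three (ha : a.2 = 3) (hb : b.2 = 3) (hta : t ∈ sched p a)
    (htb : t ∈ sched p b) : a = b := by
  by_contra hab
  have hblock : (a.1 : ℕ) ≠ b.1 := fun h => hab (Prod.ext (Fin.ext h) (ha.trans hb.symm))
  exact disjoint_left.1 (pairwise_disjoint_blockSched_three hblock)
    (ha ▸ hta : t ∈ blockSched a.1 3) (hb ▸ htb : t ∈ blockSched b.1 3)

lemma eq_or_eq_of_mem_sched (ha : a.2 ≠ 3) (hb : b.2 ≠ 3) (hab : a ≠ b) (hta : t ∈ sched p a)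
    (htb : t ∈ sched p b) (htc : t ∈ sched p c) : c = a ∨ c = b := by
  have hc : c.2 ≠ 3 := fun hc => disjoint_left.1 (disjoint_blockSched_three_Ico a.1 c.1)
    (hc ▸ htc) (mem_Ico_pairStart_of_mem_sched ha hb hab hta htb)
  have hba := block_eq_of_mem_sched hb ha htb hta
  have hca := block_eq_of_mem_sched hc ha htc hta
  obtain ⟨k, hk3, hk⟩ := exists_notMem_blockSched a.1 t
  have hka : k ≠ a.2 := by rintro rfl; exact hk hta
  have hkb : k ≠ b.2 := by rintro rfl; exact hk (hba ▸ htb)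
  have hkc : k ≠ c.2 := by rintro rfl; exact hk (hca ▸ htc)
  have hj : a.2 ≠ b.2 := fun h => hab (Prod.ext hba.symm h)
  rcases (by omega : c.2 = a.2 ∨ c.2 = b.2) with h | h
  · exact Or.inl (Prod.ext hca h)
  · exact Or.inr (Prod.ext (hca.trans hba.symm) h)

lemma eq_or_eq_or_eq_of_mem_sched (hta : t ∈ sched p a) (htb : t ∈ sched p b)
    (htc : t ∈ sched p c) (h : a.2 = 3 ↔ b.2 = 3) : a = b ∨ c = a ∨ c = b := by
  by_cases ha : a.2 = 3
  · exact Or.inl (eq_of_mem_sched_of_eq_three ha (h.1 ha) hta htb)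
  · by_cases hab : a = b
    · exact Or.inl hab
    · exact Or.inr (eq_or_eq_of_mem_sched ha (mt h.2 ha) hab hta htb htc)

lemma ncard_setOf_mem_sched_le_two (t : ℝ) : {a : JobP p | t ∈ sched p a}.ncard ≤ 2 := by
  refine not_lt.1 fun h => ?_
  obtain ⟨x, y, z, hx, hy, hz, hxy, hxz, hyz⟩ := (two_lt_ncard_iff (toFinite _)).1 h
  have : (x.2 = 3 ↔ y.2 = 3) ∨ (x.2 = 3 ↔ z.2 = 3) ∨ (y.2 = 3 ↔ z.2 = 3) := by tauto
  rcases this with h | h | h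
  · rcases eq_or_eq_or_eq_of_mem_sched hx hy hz h with h | h | h <;> simp_all
  · rcases eq_or_eq_or_eq_of_mem_sched hx hz hy h with h | h | h <;> simp_all
  · rcases eq_or_eq_or_eq_of_mem_sched hy hz hx h with h | h | h <;> simp_all

end Sched

end JobP

end

/-- There is a feasible preemptive two-machine schedule of `J_p` in which `a_4^p`
completes exactly at time `2p + 3 - 1/2^(p+1)`. -/
theorem a4p_completion_achieved (p : ℕ) :
    ∃ S : JobP p → Set ℝ, FeasibleP S ∧
      sSup (S (Fin.last p, 3)) = 2 * (p : ℝ) + 3 - 1 / 2 ^ (p + 1) :=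
  ⟨JobP.sched p,
    ⟨fun a => JobP.measurableSet_blockSched a.1 a.2, fun _ _ => JobP.relDate_le_of_mem_sched,
      fun a => JobP.volume_blockSched a.1 a.2, JobP.ncard_setOf_mem_sched_le_two,
      fun _ _ hab _ hs _ ht => JobP.le_of_prec hab hs ht⟩,
    by rw [JobP.sched, JobP.csSup_blockSched_three, Fin.val_last, JobP.lag]⟩
end

section
/- For the instance J_p, in every feasible preemptive two-machine schedule the following lower bound on the start time of a_4^p holds: start(a_4^p) ≥ 2p + 2 − 1/2^{p+1}. This follows because the total work that must execute in the interval [2p, start(a_4^p)] is at least 4 − 1/2^p and at most two machines are available. -/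
open MeasureTheory

/-!
Write `T i` for the start of `a_4^i`. The jobs `a_1^i, a_2^i, a_3^i` run entirely inside the
window `[2i, T i]`, and for `i > 0` so does all of `a_4^(i-1)` except what it runs in
`[T (i-1), 2i]`, which by induction is at most `1/2^i`. Two machines do at most `2 (T i - 2i)`
work in the window, whence `2 (T i - 2i) ≥ 4 - 1/2^i` (or `≥ 3` for `i = 0`).
-/

open scoped ENNReal
open Set

section Capacity

variable {α ι : Type*} [MeasurableSpace α] [Fintype ι] (μ : Measure α) {A : ι → Set α} {k : ℕ}

theorem sum_measure_inter_le_mul_s16 (hA : ∀ a, MeasurableSet (A a))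
    (hk : ∀ t, {a | t ∈ A a}.ncard ≤ k) (I : Set α) :
    ∑ a, μ (A a ∩ I) ≤ k * μ I := by
  classical
  have hcount (t : α) : ∑ a, (A a).indicator (1 : α → ℝ≥0∞) t ≤ k := by
    have hcard : (Finset.univ.filter (t ∈ A ·)).card = {a | t ∈ A a}.ncard := by
      rw [ncard_eq_toFinset_card']
      congr 1
      ext a
      simp
    simp only [indicator_apply, Pi.one_apply, Finset.sum_boole, hcard]
    exact_mod_cast hk t
  calc ∑ a, μ (A a ∩ I) = ∫⁻ t in I, ∑ a, (A a).indicator 1 t ∂μ := by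
        rw [lintegral_finsetSum _ fun a _ ↦ measurable_one.indicator (hA a)]
        simp only [lintegral_indicator_one (hA _), Measure.restrict_apply (hA _)]
    _ ≤ ∫⁻ _ in I, (k : ℝ≥0∞) ∂μ := lintegral_mono hcount
    _ = k * μ I := setLIntegral_const I k

theorem sum_measureReal_inter_le_mul (hA : ∀ a, MeasurableSet (A a))
    (hk : ∀ t, {a | t ∈ A a}.ncard ≤ k) {I : Set α} (hI : μ I ≠ ∞) (s : Finset ι) :
    ∑ a ∈ s, μ.real (A a ∩ I) ≤ k * μ.real I := by
  have hfin (a : ι) : μ (A a ∩ I) ≠ ∞ := measure_ne_top_of_subset inter_subset_right hI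
  calc ∑ a ∈ s, μ.real (A a ∩ I) ≤ ∑ a, μ.real (A a ∩ I) :=
        Finset.sum_le_sum_of_subset_of_nonneg (Finset.subset_univ s) fun _ _ _ ↦ measureReal_nonneg
    _ = (∑ a, μ (A a ∩ I)).toReal := (ENNReal.toReal_sum fun a _ ↦ hfin a).symm
    _ ≤ (k * μ I).toReal :=
        ENNReal.toReal_mono (ENNReal.mul_ne_top (ENNReal.natCast_ne_top k) hI)
          (sum_measure_inter_le_mul_s16 μ hA hk I)
    _ = k * μ.real I := by simp [measureReal_def]

end Capacity

theorem volume_real_le_inter_Icc_add_of_subset {A : Set ℝ} {a b : ℝ} (hA : A ⊆ Icc a b)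
    (c : ℝ) :
    volume.real A ≤ volume.real (A ∩ Icc c b) + max (c - a) 0 := by
  have hcover : A ⊆ (A ∩ Icc c b) ∪ Ico a c := by
    intro s hs
    by_cases hcs : c ≤ s
    · exact Or.inl ⟨hs, hcs, (hA hs).2⟩
    · exact Or.inr ⟨(hA hs).1, not_le.mp hcs⟩
  calc volume.real A ≤ volume.real ((A ∩ Icc c b) ∪ Ico a c) :=
        measureReal_mono hcover (measure_union_lt_top
          ((measure_mono inter_subset_right).trans_lt measure_Icc_lt_top) measure_Ico_lt_top).ne
    _ ≤ volume.real (A ∩ Icc c b) + volume.real (Ico a c) := measureReal_union_le _ _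
    _ = volume.real (A ∩ Icc c b) + max (c - a) 0 := by rw [Real.volume_real_Ico]

namespace FeasibleP

variable {p : ℕ} {S : JobP p → Set ℝ}

theorem nonempty (hS : FeasibleP S) (a : JobP p) : (S a).Nonempty :=
  nonempty_of_measure_ne_zero (μ := volume) (by simp [hS.2.2.1 a])

theorem sInf_le (hS : FeasibleP S) {a : JobP p} {s : ℝ} (hs : s ∈ S a) : sInf (S a) ≤ s :=
  csInf_le ⟨relDate a, hS.2.1 a⟩ hs

theorem relDate_le_sInf (hS : FeasibleP S) (a : JobP p) : relDate a ≤ sInf (S a) :=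
  le_csInf (hS.nonempty a) (hS.2.1 a)

theorem le_sInf_of_prec (hS : FeasibleP S) {a b : JobP p} (hab : Prec a b) {s : ℝ}
    (hs : s ∈ S a) :
    s ≤ sInf (S b) :=
  le_csInf (hS.nonempty b) fun t ht ↦ hS.2.2.2.2 a b hab s hs t ht

theorem subset_Icc_of_ne (hS : FeasibleP S) {i : Fin (p + 1)} {j : Fin 4} (hj : j ≠ 3) :
    S (i, j) ⊆ Icc (2 * (i : ℝ)) (sInf (S (i, 3))) := fun s hs ↦
  ⟨by simpa [relDate, hj] using hS.2.1 _ hs,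
    hS.le_sInf_of_prec (a := (i, j)) (b := (i, 3)) (Or.inl ⟨rfl, hj, rfl⟩) hs⟩

theorem subset_Icc_succ (hS : FeasibleP S) (i : Fin p) :
    S (i.castSucc, 3) ⊆ Icc (sInf (S (i.castSucc, 3))) (sInf (S (i.succ, 3))) := fun s hs ↦
  ⟨hS.sInf_le hs, hS.le_sInf_of_prec (Or.inr ⟨rfl, rfl, by simp⟩) hs⟩

theorem three_add_measureReal_inter_le (hS : FeasibleP S) (i : Fin (p + 1)) {x : JobP p}
    (hx : x.2 = 3) :
    3 + volume.real (S x ∩ Icc (2 * (i : ℝ)) (sInf (S (i, 3)))) ≤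
      2 * (sInf (S (i, 3)) - 2 * i) := by
  set I := Icc (2 * (i : ℝ)) (sInf (S (i, 3)))
  have hunit {j : Fin 4} (hj : j ≠ 3) : volume.real (S (i, j) ∩ I) = 1 := by
    rw [inter_eq_self_of_subset_left (hS.subset_Icc_of_ne hj), measureReal_def, hS.2.2.1,
      ENNReal.toReal_one]
  have hwidth : 2 * (i : ℝ) ≤ sInf (S (i, 3)) := by
    have := hS.relDate_le_sInf (i, 3)
    simp only [relDate, if_pos] at this
    linarith
  have hcap := sum_measureReal_inter_le_mul volume hS.1 hS.2.2.2.1 (I := I) measure_Icc_lt_top.ne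
    {(i, 0), (i, 1), (i, 2), x}
  rw [Finset.sum_insert (by simp [Prod.ext_iff, hx]),
    Finset.sum_insert (by simp [Prod.ext_iff, hx]),
    Finset.sum_insert (by simp [Prod.ext_iff, hx]), Finset.sum_singleton, hunit (by decide),
    hunit (by decide), hunit (by decide), Real.volume_real_Icc_of_le hwidth] at hcap
  push_cast at hcap
  linarith

theorem start_a4_lower_bound (hS : FeasibleP S) (i : Fin (p + 1)) :
    2 * (i : ℝ) + 2 - 1 / 2 ^ ((i : ℕ) + 1) ≤ sInf (S (i, 3)) := by
  induction i using Fin.induction with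
  | zero =>
    have hwork := hS.three_add_measureReal_inter_le 0 (x := (0, 3)) rfl
    norm_num at hwork ⊢
    linarith [measureReal_nonneg (μ := volume) (s := S (0, 3) ∩ Icc 0 (sInf (S (0, 3))))]
  | succ i ih =>
    have hwork := hS.three_add_measureReal_inter_le i.succ (x := (i.castSucc, 3)) rfl
    have hspill :=
      volume_real_le_inter_Icc_add_of_subset (hS.subset_Icc_succ i) (2 * (i.succ : ℝ))
    rw [measureReal_def, hS.2.2.1, ENNReal.toReal_one] at hspill
    have hlate : max (2 * (i.succ : ℝ) - sInf (S (i.castSucc, 3))) 0 ≤ 1 / 2 ^ ((i : ℕ) + 1) :=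
      max_le (by simp only [Fin.val_succ, Fin.val_castSucc] at ih ⊢; push_cast; linarith)
        (by positivity)
    have hhalf : (1 : ℝ) / 2 ^ ((i : ℕ) + 1 + 1) = 1 / 2 ^ ((i : ℕ) + 1) / 2 := by ring
    simp only [Fin.val_succ, hhalf] at hwork hspill hlate ⊢
    linarith

end FeasibleP

/-- In any feasible preemptive two-machine schedule of `J_p`, the job `a_4^p`
starts no earlier than `2p + 2 - 1/2^(p+1)`. -/
theorem a4p_start_lower_bound (p : ℕ) (S : JobP p → Set ℝ) (hS : FeasibleP S) :
    2 * (p : ℝ) + 2 - 1 / 2 ^ (p + 1) ≤ sInf (S (Fin.last p, 3)) := by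
  simpa using hS.start_a4_lower_bound (Fin.last p)
end
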